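/- (The dual of an MRD code is MRD) Let R be a finite chain ring, let m ≤ n, and let C ⊆ M_{m,n}(R) be a code (a free R-submodule) with 0 < rank(C) < mn and minimum rank distance d := min{rank(X) : X ∈ C, X ≠ 0}. If C is MRD, i.e. |C| = |R|^{m(n−d+1)}, then C^⊥ is MRD: setting d^⊥ := min{rank(Y) : Y ∈ C^⊥, Y ≠ 0}, one has |C^⊥| = |R|^{m(n−d^⊥+1)}. -/

import Mathlib

open Matrix

/-- The rank of a matrix over `R`: the minimal number of generators of its column space
`CS(X) = span of the columns of X`. -/
noncomputable def matRank {R : Type*} [CommRing R] {m n : ℕ}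
    (X : Matrix (Fin m) (Fin n) R) : ℕ :=
  sInf {r : ℕ | ∃ s : Finset (Fin m → R), s.card = r ∧
    Submodule.span R (s : Set (Fin m → R)) = Submodule.span R (Set.range Xᵀ)}

/-- The dual code `C^⊥` of `C ⊆ M_{m,n}(R)` with respect to the trace bilinear form
`b(X,Y) = Tr(XYᵀ)`. -/
def dualCode {R : Type*} [CommRing R] {m n : ℕ}
    (C : Submodule R (Matrix (Fin m) (Fin n) R)) :
    Submodule R (Matrix (Fin m) (Fin n) R) where
  carrier := {Y | ∀ X ∈ C, Matrix.trace (X * Yᵀ) = 0}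
  add_mem' := by
    intro Y Z hY hZ X hX
    simp [Matrix.transpose_add, Matrix.mul_add, hY X hX, hZ X hX]
  zero_mem' := by
    intro X hX
    simp
  smul_mem' := by
    intro c Y hY X hX
    simp [Matrix.transpose_smul, Matrix.mul_smul, hY X hX]

/-- `N(a, b)`: the number of free `R`-submodules of `R^a` of rank `b`. -/
noncomputable def numFree (R : Type*) [CommRing R] (a b : ℕ) : ℕ :=
  Nat.card {W : Submodule R (Fin a → R) // Module.Free R ↥W ∧ Module.finrank R ↥W = b}

set_option linter.unusedSectionVars false

open scoped Classical
open IsLocalRing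


section Aux
variable {S : Type*} [CommRing S] {m n : ℕ}

lemma matRank_set_nonempty (X : Matrix (Fin m) (Fin n) S) :
    {r : ℕ | ∃ s : Finset (Fin m → S), s.card = r ∧
      Submodule.span S (s : Set (Fin m → S)) = Submodule.span S (Set.range Xᵀ)}.Nonempty := by
  classical
  refine ⟨(Finset.univ.image Xᵀ).card, Finset.univ.image Xᵀ, rfl, ?_⟩
  congr 1; ext x; exact ⟨fun h => let ⟨j, _, hj⟩ := Finset.mem_image.mp h; ⟨j, hj⟩, fun ⟨j, hj⟩ => Finset.mem_image.mpr ⟨j, Finset.mem_univ _, hj⟩⟩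

lemma matRank_le (X : Matrix (Fin m) (Fin n) S) (s : Finset (Fin m → S))
    (h : Submodule.span S (s : Set (Fin m → S)) = Submodule.span S (Set.range Xᵀ)) :
    matRank X ≤ s.card :=
  Nat.sInf_le ⟨s, rfl, h⟩

lemma exists_min_spanning (X : Matrix (Fin m) (Fin n) S) :
    ∃ s : Finset (Fin m → S), s.card = matRank X ∧
      Submodule.span S (s : Set (Fin m → S)) = Submodule.span S (Set.range Xᵀ) :=
  Nat.sInf_mem (matRank_set_nonempty X)

lemma matRank_le_right (X : Matrix (Fin m) (Fin n) S) : matRank X ≤ n := by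
  classical
  refine le_trans (matRank_le X (Finset.univ.image Xᵀ) ?_) ?_
  · congr 1; ext x; exact ⟨fun h => let ⟨j, _, hj⟩ := Finset.mem_image.mp h; ⟨j, hj⟩, fun ⟨j, hj⟩ => Finset.mem_image.mpr ⟨j, Finset.mem_univ _, hj⟩⟩
  · exact le_trans Finset.card_image_le (by simp)

lemma matRank_pos (X : Matrix (Fin m) (Fin n) S) (hX : X ≠ 0) : 1 ≤ matRank X := by
  by_contra h
  push_neg at h
  interval_cases h' : matRank X
  obtain ⟨s, hcard, hspan⟩ := exists_min_spanning X
  rw [h'] at hcard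
  rw [Finset.card_eq_zero.mp hcard] at hspan
  simp only [Finset.coe_empty, Submodule.span_empty] at hspan
  apply hX
  have : ∀ j, Xᵀ j = 0 := by
    intro j
    have : Xᵀ j ∈ Submodule.span S (Set.range Xᵀ) := Submodule.subset_span ⟨j, rfl⟩
    rw [← hspan] at this
    simpa using this
  ext i j
  have := congr_fun (this j) i
  simpa using this

lemma matRank_le_support (X : Matrix (Fin m) (Fin n) S) (T : Finset (Fin n))
    (h : ∀ j ∉ T, Xᵀ j = 0) : matRank X ≤ T.card := by
  classical
  refine le_trans (matRank_le X (T.image Xᵀ) ?_) Finset.card_image_le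
  apply le_antisymm
  · apply Submodule.span_mono
    intro x hx; obtain ⟨j, -, rfl⟩ := Finset.mem_image.mp hx
    exact ⟨j, rfl⟩
  · rw [Submodule.span_le]
    rintro - ⟨j, rfl⟩
    by_cases hj : j ∈ T
    · exact Submodule.subset_span (Finset.mem_coe.mpr (Finset.mem_image_of_mem _ hj))
    · rw [h j hj]
      exact Submodule.zero_mem _

lemma span_range_mul_le (P : Matrix (Fin n) (Fin n) S) (A : Matrix (Fin n) (Fin m) S) :
    Submodule.span S (Set.range (P * A)) ≤ Submodule.span S (Set.range A) := by
  rw [Submodule.span_le]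
  rintro - ⟨i, rfl⟩
  have hrow : (P * A) i = ∑ l, P i l • A l := by
    funext j
    simp [Matrix.mul_apply, Finset.sum_apply]
  rw [hrow]
  exact Submodule.sum_mem _ fun l _ =>
    Submodule.smul_mem _ _ (Submodule.subset_span ⟨l, rfl⟩)

lemma span_range_mul_eq (P : Matrix (Fin n) (Fin n) S) (hP : IsUnit P)
    (A : Matrix (Fin n) (Fin m) S) :
    Submodule.span S (Set.range (P * A)) = Submodule.span S (Set.range A) := by
  refine le_antisymm (span_range_mul_le P A) ?_
  obtain ⟨u, hu⟩ := hP
  have : A = (↑u⁻¹ : Matrix (Fin n) (Fin n) S) * (P * A) := by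
    rw [← Matrix.mul_assoc, ← hu, Units.inv_mul, Matrix.one_mul]
  nth_rewrite 1 [this]
  exact span_range_mul_le _ _

lemma matRank_mul_unit (X : Matrix (Fin m) (Fin n) S) (P : Matrix (Fin n) (Fin n) S)
    (hP : IsUnit P) : matRank (X * Pᵀ) = matRank X := by
  unfold matRank
  congr 1
  ext r
  constructor <;> rintro ⟨s, hcard, hspan⟩ <;> refine ⟨s, hcard, ?_⟩
  · rwa [Matrix.transpose_mul, Matrix.transpose_transpose, span_range_mul_eq P hP Xᵀ] at hspan
  · rwa [Matrix.transpose_mul, Matrix.transpose_transpose, span_range_mul_eq P hP Xᵀ]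

end Aux

section Chain


variable {R : Type*} [CommRing R] [Finite R] [IsLocalRing R]

theorem chain_baer (hchain : (maximalIdeal R).IsPrincipal) : Module.Baer R R := by
  obtain ⟨π, hπ⟩ := hchain
  have hπmem : π ∈ maximalIdeal R := hπ ▸ Ideal.mem_span_singleton_self π
  have hnil : IsNilpotent (maximalIdeal R) := by
    have := IsArtinianRing.isNilpotent_jacobson_bot (R := R)
    rwa [IsLocalRing.jacobson_eq_maximalIdeal ⊥ bot_ne_top] at this
  have hπE : ∃ s : ℕ, π ^ s = 0 := by
    obtain ⟨E, hE⟩ := hnil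
    refine ⟨E, ?_⟩
    have : π ^ E ∈ (maximalIdeal R) ^ E := Ideal.pow_mem_pow hπmem E
    rw [hE] at this
    simpa using this
  set e := Nat.find hπE with he_def
  have he0 : π ^ e = 0 := Nat.find_spec hπE
  have hlt : ∀ s, s < e → π ^ s ≠ 0 := fun s hs => Nat.find_min hπE hs
  have hzero : ∀ s, e ≤ s → π ^ s = 0 := by
    intro s hs
    have : π ^ s = π ^ e * π ^ (s - e) := by rw [← pow_add, Nat.add_sub_cancel' hs]
    rw [this, he0, zero_mul]
  have hpow : ∀ s : ℕ, (maximalIdeal R) ^ s = Ideal.span {π ^ s} := by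
    intro s; rw [hπ]; exact Ideal.span_singleton_pow π s
  -- every nonzero element is a unit times a power of π
  have L1 : ∀ x : R, x ≠ 0 → ∃ (u : Rˣ) (s : ℕ), s < e ∧ x = (u : R) * π ^ s := by
    intro x hx
    have hPe : x ∉ Ideal.span {π ^ e} := by
      rw [he0]
      simp [Ideal.span_singleton_eq_bot.mpr rfl, hx]
    have hex : ∃ s, x ∉ Ideal.span {π ^ s} := ⟨e, hPe⟩
    set s₀ := Nat.find hex with hs₀def
    have hs₀ : x ∉ Ideal.span {π ^ s₀} := Nat.find_spec hex
    have hs₀pos : 0 < s₀ := by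
      rcases Nat.eq_zero_or_pos s₀ with h | h
      · exfalso; apply hs₀; rw [h]; simp [Ideal.span_singleton_one]
      · exact h
    have hmem : x ∈ Ideal.span {π ^ (s₀ - 1)} := by
      by_contra hcon
      have h' : s₀ ≤ s₀ - 1 := Nat.find_le hcon
      omega
    obtain ⟨c, hc⟩ := Ideal.mem_span_singleton'.mp hmem
    have hcu : IsUnit c := by
      by_contra hcu
      have : c ∈ maximalIdeal R := (IsLocalRing.mem_maximalIdeal c).mpr (mem_nonunits_iff.mpr hcu)
      rw [hπ] at this
      obtain ⟨d, hd⟩ := Ideal.mem_span_singleton'.mp this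
      apply hs₀
      refine Ideal.mem_span_singleton'.mpr ⟨d, ?_⟩
      rw [← hc, ← hd]
      have : π ^ s₀ = π * π ^ (s₀ - 1) := by
        rw [← pow_succ']
        congr 1
        omega
      rw [this]; ring
    obtain ⟨u, hu⟩ := hcu
    have hπs : π ^ (s₀ - 1) ≠ 0 := by
      intro h0
      apply hx
      rw [← hc, h0, mul_zero]
    have : s₀ - 1 < e := by
      by_contra hcon
      exact hπs (hzero _ (by omega))
    exact ⟨u, s₀ - 1, this, by rw [← hc, hu]⟩
  -- every ideal is a power of π
  have L2 : ∀ I : Ideal R, ∃ s, s ≤ e ∧ I = Ideal.span {π ^ s} := by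
    intro I
    have hTne : (∃ s, π ^ s ∈ I) := ⟨e, by rw [he0]; exact I.zero_mem⟩
    set T := {s : ℕ | π ^ s ∈ I} with hT
    have hTne' : T.Nonempty := hTne
    set s₀ := sInf T with hs₀
    have hs₀T : s₀ ∈ T := Nat.sInf_mem hTne'
    have hs₀e : s₀ ≤ e := Nat.sInf_le (by exact (by rw [hT]; exact (by simp only [Set.mem_setOf_eq]; rw [he0]; exact I.zero_mem) : e ∈ T))
    refine ⟨s₀, hs₀e, le_antisymm ?_ ?_⟩
    · intro x hx
      rcases eq_or_ne x 0 with rfl | hx0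
      · exact Ideal.zero_mem _
      obtain ⟨u, s, hse, rfl⟩ := L1 x hx0
      have hπsI : π ^ s ∈ I := by
        have : (↑u⁻¹ : R) * ((u : R) * π ^ s) = π ^ s := by
          rw [← mul_assoc, Units.inv_mul, one_mul]
        rw [← this]
        exact I.mul_mem_left _ hx
      have hss₀ : s₀ ≤ s := Nat.sInf_le hπsI
      refine Ideal.mem_span_singleton'.mpr ⟨(u : R) * π ^ (s - s₀), ?_⟩
      rw [mul_assoc, ← pow_add]
      congr 2
      omega
    · rw [Ideal.span_le, Set.singleton_subset_iff]
      exact hs₀T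
  -- Baer's criterion
  intro I g
  obtain ⟨s, hse, rfl⟩ := L2 I
  set a : R := g ⟨π ^ s, Ideal.mem_span_singleton_self _⟩ with ha
  have key : π ^ (e - s) * a = 0 := by
    have h1 : (π ^ (e - s) • (⟨π ^ s, Ideal.mem_span_singleton_self _⟩ : Ideal.span {π ^ s}))
        = (0 : Ideal.span {π ^ s}) := by
      apply Subtype.ext
      show π ^ (e - s) • π ^ s = (0 : R)
      rw [smul_eq_mul, ← pow_add, hzero _ (by omega)]
    calc π ^ (e - s) * a = π ^ (e - s) • a := (smul_eq_mul _ _).symm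
      _ = g (π ^ (e - s) • ⟨π ^ s, Ideal.mem_span_singleton_self _⟩) := (_root_.map_smul g _ _).symm
      _ = g 0 := by rw [h1]
      _ = 0 := map_zero g
  obtain ⟨b, hb⟩ : ∃ b : R, b * π ^ s = a := by
    rcases eq_or_ne a 0 with h0 | h0
    · exact ⟨0, by rw [zero_mul, h0]⟩
    obtain ⟨u, t, hte, hat⟩ := L1 a h0
    have h2 : π ^ (e - s + t) = 0 := by
      have : (↑u⁻¹ : R) * (π ^ (e - s) * a) = π ^ (e - s + t) := by
        rw [hat, pow_add]; linear_combination (π ^ (e - s) * π ^ t) * u.inv_mul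
      rw [← this, key, mul_zero]
    have hts : s ≤ t := by
      by_contra hcon
      exact hlt _ (by omega) h2
    refine ⟨(u : R) * π ^ (t - s), ?_⟩
    rw [hat, mul_assoc, ← pow_add]
    congr 2
    omega
  refine ⟨LinearMap.toSpanSingleton R R b, ?_⟩
  intro x mem
  obtain ⟨c, hc⟩ := Ideal.mem_span_singleton'.mp mem
  have hx : (⟨x, mem⟩ : Ideal.span {π ^ s}) = c • ⟨π ^ s, Ideal.mem_span_singleton_self _⟩ := by
    apply Subtype.ext
    show x = c • π ^ s
    rw [smul_eq_mul, hc]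
  rw [hx, _root_.map_smul]
  show x • b = c • a
  rw [smul_eq_mul, smul_eq_mul, ← hc, ← hb]
  ring


theorem trace_mul_transpose {m n : ℕ} (X Y : Matrix (Fin m) (Fin n) R) :
    Matrix.trace (X * Yᵀ) = ∑ i, ∑ j, X i j * Y i j := by
  simp [Matrix.trace, Matrix.mul_apply, Matrix.diag]

theorem card_dualCode_mul {m n : ℕ} (hBaer : Module.Baer R R)
    (C : Submodule R (Matrix (Fin m) (Fin n) R)) [Module.Free R ↥C] :
    Nat.card ↥(dualCode C) * Nat.card ↥C = Nat.card R ^ (m * n) := by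
  set M := Matrix (Fin m) (Fin n) R
  let bilin : M →ₗ[R] M →ₗ[R] R :=
    LinearMap.mk₂ R (fun X Y => Matrix.trace (X * Yᵀ))
      (fun X X' Y => by beta_reduce; rw [Matrix.add_mul, Matrix.trace_add])
      (fun c X Y => by beta_reduce; rw [Matrix.smul_mul, Matrix.trace_smul, smul_eq_mul])
      (fun X Y Y' => by beta_reduce; rw [Matrix.transpose_add, Matrix.mul_add, Matrix.trace_add])
      (fun c X Y => by beta_reduce; rw [Matrix.transpose_smul, Matrix.mul_smul, Matrix.trace_smul, smul_eq_mul])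
  let Phi : M →ₗ[R] Module.Dual R ↥C := C.subtype.dualMap ∘ₗ bilin.flip
  have hsurj : Function.Surjective Phi := by
    intro f
    obtain ⟨h, hh⟩ := (hBaer.injective).out C.subtype C.injective_subtype f
    refine ⟨Matrix.of (fun i j => h (Matrix.single i j 1)), ?_⟩
    have key : bilin.flip (Matrix.of (fun i j => h (Matrix.single i j 1))) = h := by
      apply (Matrix.stdBasis R (Fin m) (Fin n)).ext
      rintro ⟨i, j⟩
      rw [Matrix.stdBasis_eq_single]
      show Matrix.trace (Matrix.single i j (1:R) * (Matrix.of fun i j => h (Matrix.single i j 1))ᵀ) = _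
      rw [trace_mul_transpose]
      simp [Matrix.single, ite_and]
    apply LinearMap.ext
    intro x
    show (bilin.flip (Matrix.of fun i j => h (Matrix.single i j 1))) (C.subtype x) = f x
    rw [key]
    exact hh x
  have hker : LinearMap.ker Phi = dualCode C := by
    ext Y
    constructor
    · intro hY X hX
      have := LinearMap.congr_fun ((LinearMap.mem_ker).mp hY) ⟨X, hX⟩
      simpa [Phi, bilin] using this
    · intro hY
      rw [LinearMap.mem_ker]
      apply LinearMap.ext
      rintro ⟨X, hX⟩
      simpa [Phi, bilin] using hY X hX
  have hcardM : Nat.card M = Nat.card (LinearMap.ker Phi) * Nat.card (M ⧸ LinearMap.ker Phi) :=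
    Submodule.card_eq_card_quotient_mul_card _
  have hquot : Nat.card (M ⧸ LinearMap.ker Phi) = Nat.card (Module.Dual R ↥C) :=
    Nat.card_congr (LinearMap.quotKerEquivOfSurjective Phi hsurj).toEquiv
  have hfin : Module.Finite R ↥C := Module.Finite.of_finite
  set k := Module.finrank R ↥C
  have hcardC : Nat.card ↥C = Nat.card R ^ k := by
    have := Nat.card_congr (Module.finBasis R ↥C).equivFun.toEquiv
    rw [this, Nat.card_fun]
    congr 1
    simp [k]
  have hcardD : Nat.card (Module.Dual R ↥C) = Nat.card R ^ k := by
    have := Nat.card_congr (Module.finBasis R ↥C).dualBasis.equivFun.toEquiv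
    rw [this, Nat.card_fun]
    congr 1
    simp [k]
  have hM : Nat.card M = Nat.card R ^ (m * n) := by
    have h1 : Nat.card M = Nat.card (Fin m → Fin n → R) := rfl
    rw [h1, Nat.card_fun, Nat.card_fun, ← pow_mul]
    congr 1
    · simp [mul_comm]
    
  have h1 : Nat.card ↥(dualCode C) = Nat.card ↥(LinearMap.ker Phi) := by rw [hker]
  have h2 : Nat.card ↥C = Nat.card (M ⧸ LinearMap.ker Phi) := by rw [hcardC, hquot, hcardD]
  rw [h1, h2, ← hcardM, hM]
theorem exists_unit_completion {n r : ℕ} (hn0 : 0 < n) (hrn : r ≤ n)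
    (Bmat : Matrix (Fin r) (Fin n) R)
    (hv : LinearIndependent (ResidueField R) (fun i => (fun j => residue R (Bmat i j)))) :
    ∃ P : Matrix (Fin n) (Fin n) R, IsUnit P ∧ ∀ i : Fin r, P (Fin.castLE hrn i) = Bmat i := by
  classical
  set k := ResidueField R
  set v : Fin r → (Fin n → k) := fun i => (fun j => residue R (Bmat i j)) with hvdef
  obtain ⟨q, hq⟩ := Submodule.exists_isCompl (Submodule.span k (Set.range v))
  set nr := Module.finrank k ↥q with hnr_def
  let w0 := Module.finBasis k ↥q
  set w : Fin nr → (Fin n → k) := fun i => (w0 i : Fin n → k) with hwdef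
  have hw : LinearIndependent k w :=
    w0.linearIndependent.map' q.subtype (Submodule.ker_subtype q)
  have hspanw : Submodule.span k (Set.range w) = q := by
    have h1 : Set.range w = q.subtype '' Set.range w0 := by
      rw [← Set.range_comp]; rfl
    rw [h1, Submodule.span_image, Module.Basis.span_eq, Submodule.map_subtype_top]
  have hdisj : Disjoint (Submodule.span k (Set.range v)) (Submodule.span k (Set.range w)) := by
    rw [hspanw]; exact hq.disjoint
  have hsum : LinearIndependent k (Sum.elim v w) := hv.sum_type hw hdisj
  have hspan_sum : Submodule.span k (Set.range (Sum.elim v w)) = ⊤ := by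
    rw [Set.Sum.elim_range, Submodule.span_union, hspanw]
    exact hq.codisjoint.eq_top
  let bS : Module.Basis (Fin r ⊕ Fin nr) k (Fin n → k) := Module.Basis.mk hsum (le_of_eq hspan_sum.symm)
  have hn : r + nr = n := by
    have h1 := Module.finrank_eq_card_basis bS
    rw [Module.finrank_pi] at h1
    simpa using h1.symm
  set F : Fin n → (Fin n → k) :=
    fun j => Sum.elim v w (finSumFinEquiv.symm (Fin.cast hn.symm j)) with hFdef
  have hF : LinearIndependent k F := by
    have : F = (Sum.elim v w) ∘ (fun j => finSumFinEquiv.symm (Fin.cast hn.symm j)) := rfl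
    rw [this]
    exact hsum.comp _ (fun x y hxy => by
      have := congrArg (fun z => (finSumFinEquiv z : Fin (r + nr))) hxy
      simpa [Fin.ext_iff] using this)
  have hFval : ∀ i : Fin r, F (Fin.castLE hrn i) = v i := by
    intro i
    show Sum.elim v w (finSumFinEquiv.symm (Fin.cast hn.symm (Fin.castLE hrn i))) = v i
    have h2 : Fin.cast hn.symm (Fin.castLE hrn i) = Fin.castAdd nr i := by
      apply Fin.ext; simp
    rw [h2, finSumFinEquiv_symm_apply_castAdd]
    rfl
  haveI : Nonempty (Fin n) := ⟨⟨0, hn0⟩⟩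
  let bF := basisOfLinearIndependentOfCardEqFinrank hF (by simp [Module.finrank_pi])
  set Pk : Matrix (Fin n) (Fin n) k := Matrix.of F with hPkdef
  have hPkdet : IsUnit Pk.det := by
    have htr : Pkᵀ = (Pi.basisFun k (Fin n)).toMatrix ⇑bF := by
      ext i j
      rw [Module.Basis.toMatrix_apply, Pi.basisFun_repr,
        coe_basisOfLinearIndependentOfCardEqFinrank]
      rfl
    haveI := (Pi.basisFun k (Fin n)).invertibleToMatrix bF
    have : IsUnit ((Pi.basisFun k (Fin n)).toMatrix ⇑bF).det :=
      (Matrix.isUnit_iff_isUnit_det _).mp (isUnit_of_invertible _)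
    rw [← htr, Matrix.det_transpose] at this
    exact this
  have hres : Function.Surjective (residue R) := Ideal.Quotient.mk_surjective
  set P : Matrix (Fin n) (Fin n) R :=
    Matrix.of (fun j l => if h : (j : ℕ) < r then Bmat ⟨j, h⟩ l
      else Function.surjInv hres (F j l)) with hPdef
  have hmap : P.map (residue R) = Pk := by
    ext j l
    by_cases h : (j : ℕ) < r
    · have h3 : F j l = v ⟨j, h⟩ l := congrFun (hFval ⟨j, h⟩) l
      simp only [Matrix.map_apply, hPdef, Matrix.of_apply, dif_pos h, hPkdef]
      rw [h3]
    · simp only [Matrix.map_apply, hPdef, Matrix.of_apply, dif_neg h, hPkdef]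
      exact Function.surjInv_eq hres _
  have hPdet : IsUnit P.det := by
    by_contra h
    have h𝔪 : P.det ∈ maximalIdeal R :=
      (IsLocalRing.mem_maximalIdeal _).mpr (mem_nonunits_iff.mpr h)
    have h0 : residue R P.det = 0 := (IsLocalRing.residue_eq_zero_iff _).mpr h𝔪
    rw [RingHom.map_det] at h0
    have : (residue R).mapMatrix P = Pk := by
      rw [RingHom.mapMatrix_apply]; exact hmap
    rw [this] at h0
    rw [h0] at hPkdet
    exact not_isUnit_zero hPkdet
  refine ⟨P, (Matrix.isUnit_iff_isUnit_det P).mpr hPdet, ?_⟩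
  intro i
  funext l
  have h4 : ((Fin.castLE hrn i : Fin n) : ℕ) < r := i.isLt
  show (if h : ((Fin.castLE hrn i : Fin n) : ℕ) < r then Bmat ⟨(Fin.castLE hrn i : Fin n), h⟩ l
    else Function.surjInv hres (F (Fin.castLE hrn i) l)) = Bmat i l
  rw [dif_pos h4]
  congr 1
theorem exists_factorization {m n : ℕ} (Y : Matrix (Fin m) (Fin n) R) (hY0 : Y ≠ 0) :
    ∃ (A : Matrix (Fin m) (Fin (matRank Y)) R) (Bmat : Matrix (Fin (matRank Y)) (Fin n) R),
      Y = A * Bmat ∧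
      LinearIndependent (ResidueField R) (fun i => (fun j => residue R (Bmat i j))) := by
  classical
  set r := matRank Y with hrdef
  have hr1 : 1 ≤ r := matRank_pos Y hY0
  obtain ⟨s, hs_card, hs_span⟩ := exists_min_spanning Y
  set a : Fin r → (Fin m → R) := fun i => ↑(s.equivFin.symm (Fin.cast hs_card.symm i)) with hadef
  have ha_range : Set.range a = ↑s := by
    have h1 : Function.Surjective (fun i : Fin r => s.equivFin.symm (Fin.cast hs_card.symm i)) :=
      (s.equivFin.symm.surjective).comp (fun x => ⟨Fin.cast hs_card x, Fin.ext rfl⟩)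
    have h2 : Set.range a = Set.range ((↑) : ↥s → (Fin m → R)) := h1.range_comp _
    rw [h2]
    ext x
    simp
  have hspan_a : Submodule.span R (Set.range a) = Submodule.span R (Set.range Yᵀ) := by
    rw [ha_range]; exact hs_span
  have ha_memV : ∀ i, a i ∈ Submodule.span R (Set.range Yᵀ) := fun i => by
    rw [← hspan_a]; exact Submodule.subset_span ⟨i, rfl⟩
  have hBc : ∀ j, ∃ c : Fin r → R, ∑ i, c i • a i = Yᵀ j := fun j =>
    (Submodule.mem_span_range_iff_exists_fun R).mp (by rw [hspan_a]; exact Submodule.subset_span ⟨j, rfl⟩)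
  choose Bc hBcs using hBc
  set Bmat : Matrix (Fin r) (Fin n) R := Matrix.of (fun i j => Bc j i) with hBdef
  set A : Matrix (Fin m) (Fin r) R := Matrix.of (fun p i => a i p) with hAdef
  have hYAB : Y = A * Bmat := by
    ext p j
    rw [Matrix.mul_apply]
    have := congrFun (hBcs j) p
    simp only [Finset.sum_apply, Pi.smul_apply, smul_eq_mul] at this
    rw [show Y p j = Yᵀ j p from rfl, ← this]
    apply Finset.sum_congr rfl
    intro i _
    simp [hAdef, hBdef, mul_comm]
  refine ⟨A, Bmat, hYAB, ?_⟩
  by_contra hvn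
  obtain ⟨g, hg, i₀, hgi₀⟩ := Fintype.not_linearIndependent_iff.mp hvn
  have hres : Function.Surjective (residue R) := Ideal.Quotient.mk_surjective
  set glift : Fin r → R := fun i => Function.surjInv hres (g i) with hgldef
  have hglift : ∀ i, residue R (glift i) = g i := fun i => Function.surjInv_eq hres _
  have hunit : IsUnit (glift i₀) := by
    by_contra h
    apply hgi₀
    rw [← hglift i₀]
    exact (IsLocalRing.residue_eq_zero_iff _).mpr
      ((IsLocalRing.mem_maximalIdeal _).mpr (mem_nonunits_iff.mpr h))
  set u : Rˣ := hunit.unit with hudef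
  have hu : (u : R) = glift i₀ := rfl
  set z : Fin n → R := fun j => ∑ i, glift i * Bmat i j with hzdef
  have hz : ∀ j, z j ∈ maximalIdeal R := by
    intro j
    rw [← IsLocalRing.residue_eq_zero_iff]
    have : residue R (z j) = ∑ i, g i * residue R (Bmat i j) := by
      simp only [hzdef, map_sum]
      apply Finset.sum_congr rfl
      intro i _
      rw [RingHom.map_mul, hglift]
    rw [this]
    have := congrFun hg j
    simpa [Finset.sum_apply] using this
  set a' : Fin r → (Fin m → R) := fun i => a i - ((↑u⁻¹ : R) * glift i) • a i₀ with ha'def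
  set W : Submodule R (Fin m → R) :=
    Submodule.span R (a' '' (↑(Finset.univ.erase i₀) : Set (Fin r))) with hWdef
  have key : ∀ j, Yᵀ j =
      (∑ i ∈ Finset.univ.erase i₀, Bmat i j • a' i) + ((↑u⁻¹ : R) * z j) • a i₀ := by
    intro j
    have e1 : ∑ i ∈ Finset.univ.erase i₀, Bmat i j • a' i
        = ∑ i ∈ Finset.univ.erase i₀, Bmat i j • a i
          - (∑ i ∈ Finset.univ.erase i₀, (Bmat i j * ((↑u⁻¹ : R) * glift i))) • a i₀ := by
      rw [Finset.sum_smul, ← Finset.sum_sub_distrib]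
      apply Finset.sum_congr rfl
      intro i _
      rw [ha'def]
      rw [smul_sub, smul_smul]
    have e2 : ∑ i, Bmat i j • a i = Yᵀ j := by
      rw [← hBcs j]
      apply Finset.sum_congr rfl
      intro i _
      rfl
    have e3 : (↑u⁻¹ : R) * z j
        = Bmat i₀ j + ∑ i ∈ Finset.univ.erase i₀, (Bmat i j * ((↑u⁻¹ : R) * glift i)) := by
      have hz2 : z j = (∑ i ∈ Finset.univ.erase i₀, glift i * Bmat i j) + glift i₀ * Bmat i₀ j :=
        (Finset.sum_erase_add Finset.univ _ (Finset.mem_univ i₀)).symm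
      rw [hz2, mul_add, ← mul_assoc, ← hu]
      rw [Units.inv_mul, one_mul, Finset.mul_sum]
      rw [add_comm]
      congr 1
      apply Finset.sum_congr rfl
      intro i _
      ring
    rw [e1, e3, add_smul]
    rw [← e2, ← Finset.sum_erase_add Finset.univ (fun i => Bmat i j • a i) (Finset.mem_univ i₀)]
    abel
  have hWV : Submodule.span R (Set.range Yᵀ)
      ≤ W ⊔ (maximalIdeal R) • Submodule.span R (Set.range Yᵀ) := by
    rw [Submodule.span_le]
    rintro - ⟨j, rfl⟩
    rw [key j]
    apply Submodule.add_mem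
    · apply Submodule.mem_sup_left
      apply Submodule.sum_mem
      intro i hi
      exact Submodule.smul_mem _ _ (Submodule.subset_span ⟨i, by simpa using hi, rfl⟩)
    · apply Submodule.mem_sup_right
      exact Submodule.smul_mem_smul (Ideal.mul_mem_left _ _ (hz j)) (ha_memV i₀)
  have hVW : Submodule.span R (Set.range Yᵀ) ≤ W :=
    Submodule.le_of_le_smul_of_le_jacobson_bot (Submodule.fg_span (Set.finite_range Yᵀ))
      (by rw [IsLocalRing.jacobson_eq_maximalIdeal ⊥ bot_ne_top]) hWV
  have hWle : W ≤ Submodule.span R (Set.range Yᵀ) := by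
    rw [hWdef, Submodule.span_le]
    rintro - ⟨i, -, rfl⟩
    exact Submodule.sub_mem _ (ha_memV i) (Submodule.smul_mem _ _ (ha_memV i₀))
  set s' : Finset (Fin m → R) := (Finset.univ.erase i₀).image a' with hs'def
  have hs'span : Submodule.span R (↑s' : Set (Fin m → R)) = Submodule.span R (Set.range Yᵀ) := by
    rw [hs'def, Finset.coe_image]
    exact le_antisymm hWle hVW
  have h1 : r ≤ s'.card := matRank_le Y s' hs'span
  have h2 : s'.card ≤ r - 1 := by
    refine le_trans Finset.card_image_le ?_
    rw [Finset.card_erase_of_mem (Finset.mem_univ i₀)]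
    simp
  omega
theorem card_matrix (m' n' : ℕ) :
    Nat.card (Matrix (Fin m') (Fin n') R) = Nat.card R ^ (m' * n') := by
  have h1 : Nat.card (Matrix (Fin m') (Fin n') R) = Nat.card (Fin m' → Fin n' → R) := rfl
  rw [h1, Nat.card_fun, Nat.card_fun, ← pow_mul]
  congr 1
  · simp [mul_comm]

theorem card_filter_lt {n t : ℕ} (ht : t ≤ n) :
    (Finset.univ.filter (fun l : Fin n => (l : ℕ) < t)).card = t := by
  classical
  have himg : Finset.univ.filter (fun l : Fin n => (l : ℕ) < t)
      = Finset.univ.image (Fin.castLE ht) := by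
    ext l
    simp only [Finset.mem_filter, Finset.mem_univ, true_and, Finset.mem_image]
    constructor
    · intro hl
      exact ⟨⟨l, hl⟩, Fin.ext rfl⟩
    · rintro ⟨j, rfl⟩
      exact j.isLt
  rw [himg, Finset.card_image_of_injective _ (Fin.castLE_injective ht)]
  simp

theorem dual_dist_gt {m n : ℕ} (t : ℕ) (ht : t ≤ n)
    (C : Submodule R (Matrix (Fin m) (Fin n) R))
    (hdist : ∀ X ∈ C, X ≠ 0 → n - t < matRank X)
    (hcard : Nat.card ↥C = Nat.card R ^ (m * t))
    (Y : Matrix (Fin m) (Fin n) R) (hY : Y ∈ dualCode C) (hY0 : Y ≠ 0) :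
    t < matRank Y := by
  classical
  by_contra hcon
  push_neg at hcon
  set r := matRank Y with hrdef
  have hr1 : 1 ≤ r := matRank_pos Y hY0
  have hrn : r ≤ n := le_trans hcon ht
  have hn0 : 0 < n := by omega
  obtain ⟨A, Bmat, hYAB, hli⟩ := exists_factorization Y hY0
  obtain ⟨P, hPunit, hProws⟩ := exists_unit_completion hn0 hrn Bmat hli
  set ψ : ↥C → Matrix (Fin m) (Fin t) R :=
    fun X => Matrix.of (fun p j => ((X : Matrix (Fin m) (Fin n) R) * Pᵀ) p (Fin.castLE ht j))
    with hψdef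
  have hinj : Function.Injective ψ := by
    intro X X' hXX
    by_contra hne
    have hD : (X : Matrix (Fin m) (Fin n) R) - ↑X' ∈ C := C.sub_mem X.2 X'.2
    have hD0 : (X : Matrix (Fin m) (Fin n) R) - ↑X' ≠ 0 := by
      intro h
      exact hne (Subtype.ext (sub_eq_zero.mp h))
    set D : Matrix (Fin m) (Fin n) R := (X : Matrix (Fin m) (Fin n) R) - ↑X' with hDdef
    set T := Finset.univ.filter (fun l : Fin n => ¬ ((l : ℕ) < t)) with hTdef
    have hTcard : T.card = n - t := by
      have hT2 : T = Finset.univ \ (Finset.univ.filter (fun l : Fin n => (l : ℕ) < t)) := by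
        rw [hTdef, Finset.filter_not]
      rw [hT2, Finset.card_sdiff_of_subset (Finset.filter_subset _ _), card_filter_lt ht]
      simp
    have hcols : ∀ l ∉ T, (D * Pᵀ)ᵀ l = 0 := by
      intro l hl
      have hlt : (l : ℕ) < t := by
        by_contra h
        exact hl (Finset.mem_filter.mpr ⟨Finset.mem_univ _, h⟩)
      funext p
      have h7 := congrFun (congrFun hXX p) ⟨(l : ℕ), hlt⟩
      simp only [hψdef, Matrix.of_apply] at h7
      have hcast : Fin.castLE ht (⟨(l : ℕ), hlt⟩ : Fin t) = l := Fin.ext rfl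
      rw [hcast] at h7
      show (D * Pᵀ) p l = 0
      rw [hDdef, Matrix.sub_mul]
      simp [h7]
    have h5 : matRank (D * Pᵀ) ≤ n - t := hTcard ▸ matRank_le_support _ T hcols
    rw [matRank_mul_unit _ P hPunit] at h5
    have := hdist D hD hD0
    omega
  have hcards : Nat.card ↥C = Nat.card (Matrix (Fin m) (Fin t) R) := by
    rw [hcard, card_matrix]
  have hbij : Function.Bijective ψ := (Nat.bijective_iff_injective_and_card ψ).mpr ⟨hinj, hcards⟩
  have hA0 : A ≠ 0 := by
    intro h
    exact hY0 (by rw [hYAB, h, Matrix.zero_mul])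
  obtain ⟨p₀, i₁, hA⟩ : ∃ p i, A p i ≠ 0 := by
    by_contra h
    push_neg at h
    exact hA0 (by ext p i; exact h p i)
  set Mtar : Matrix (Fin m) (Fin t) R :=
    Matrix.of (fun p j => if p = p₀ ∧ (j : ℕ) = (i₁ : ℕ) then 1 else 0) with hMdef
  obtain ⟨X, hX⟩ := hbij.2 Mtar
  have hG : ∀ (p : Fin m) (i : Fin r),
      ((X : Matrix (Fin m) (Fin n) R) * Bmatᵀ) p i = if p = p₀ ∧ i = i₁ then 1 else 0 := by
    intro p i
    have h8 : ((X : Matrix (Fin m) (Fin n) R) * Bmatᵀ) p i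
        = ((X : Matrix (Fin m) (Fin n) R) * Pᵀ) p (Fin.castLE hrn i) := by
      rw [Matrix.mul_apply, Matrix.mul_apply]
      apply Finset.sum_congr rfl
      intro l _
      rw [Matrix.transpose_apply, Matrix.transpose_apply, hProws]
    have h9 : Fin.castLE ht (Fin.castLE hcon i) = Fin.castLE hrn i := Fin.ext rfl
    have h10 := congrFun (congrFun hX p) (Fin.castLE hcon i)
    simp only [hψdef, Matrix.of_apply] at h10
    rw [h9] at h10
    rw [h8, h10, hMdef]
    simp only [Matrix.of_apply, Fin.coe_castLE]
    congr 1
    simp [Fin.ext_iff]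
  have htr : Matrix.trace ((X : Matrix (Fin m) (Fin n) R) * Yᵀ) = 0 := hY _ X.2
  rw [hYAB, Matrix.transpose_mul, ← Matrix.mul_assoc] at htr
  rw [show ((X : Matrix (Fin m) (Fin n) R) * Bmatᵀ * Aᵀ).trace
      = ∑ p, ∑ i, ((X : Matrix (Fin m) (Fin n) R) * Bmatᵀ) p i * A p i
      from trace_mul_transpose _ A] at htr
  have : ∑ p, ∑ i, ((X : Matrix (Fin m) (Fin n) R) * Bmatᵀ) p i * A p i = A p₀ i₁ := by
    rw [Finset.sum_eq_single p₀, Finset.sum_eq_single i₁]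
    · rw [hG]; simp
    · intro i _ hi
      rw [hG]; simp [hi]
    · intro h; exact absurd (Finset.mem_univ i₁) h
    · intro p _ hp
      apply Finset.sum_eq_zero
      intro i _
      rw [hG]; simp [hp]
    · intro h; exact absurd (Finset.mem_univ p₀) h
  rw [this] at htr
  exact hA htr
theorem singleton_le {m n : ℕ} (D : Submodule R (Matrix (Fin m) (Fin n) R)) (t' : ℕ)
    (ht' : t' ≤ n) (hdist : ∀ Y ∈ D, Y ≠ 0 → n - t' < matRank Y) :
    Nat.card ↥D ≤ Nat.card R ^ (m * t') := by
  classical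
  set φ : ↥D → Matrix (Fin m) (Fin t') R :=
    fun Y => Matrix.of (fun p j => (Y : Matrix (Fin m) (Fin n) R) p (Fin.castLE ht' j))
    with hφdef
  have hinj : Function.Injective φ := by
    intro Y Y' hYY
    by_contra hne
    have hD : (Y : Matrix (Fin m) (Fin n) R) - ↑Y' ∈ D := D.sub_mem Y.2 Y'.2
    have hD0 : (Y : Matrix (Fin m) (Fin n) R) - ↑Y' ≠ 0 := by
      intro h
      exact hne (Subtype.ext (sub_eq_zero.mp h))
    set Z : Matrix (Fin m) (Fin n) R := (Y : Matrix (Fin m) (Fin n) R) - ↑Y' with hZdef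
    set T := Finset.univ.filter (fun l : Fin n => ¬ ((l : ℕ) < t')) with hTdef
    have hTcard : T.card = n - t' := by
      have hT2 : T = Finset.univ \ (Finset.univ.filter (fun l : Fin n => (l : ℕ) < t')) := by
        rw [hTdef, Finset.filter_not]
      rw [hT2, Finset.card_sdiff_of_subset (Finset.filter_subset _ _), card_filter_lt ht']
      simp
    have hcols : ∀ l ∉ T, Zᵀ l = 0 := by
      intro l hl
      have hlt : (l : ℕ) < t' := by
        by_contra h
        exact hl (Finset.mem_filter.mpr ⟨Finset.mem_univ _, h⟩)
      funext p
      have h7 := congrFun (congrFun hYY p) ⟨(l : ℕ), hlt⟩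
      simp only [hφdef, Matrix.of_apply] at h7
      have hcast : Fin.castLE ht' (⟨(l : ℕ), hlt⟩ : Fin t') = l := Fin.ext rfl
      rw [hcast] at h7
      show Z p l = 0
      rw [hZdef]
      simp [Matrix.sub_apply, h7]
    have h5 : matRank Z ≤ n - t' := hTcard ▸ matRank_le_support _ T hcols
    have := hdist Z hD hD0
    omega
  calc Nat.card ↥D ≤ Nat.card (Matrix (Fin m) (Fin t') R) :=
        Nat.card_le_card_of_injective φ hinj
    _ = Nat.card R ^ (m * t') := card_matrix m t'

theorem exists_mem_ne_zero {m n : ℕ} (D : Submodule R (Matrix (Fin m) (Fin n) R))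
    (hD : 1 < Nat.card ↥D) : ∃ Y ∈ D, Y ≠ 0 := by
  haveI : Nontrivial ↥D := Finite.one_lt_card_iff_nontrivial.mp hD
  obtain ⟨y, hy⟩ := exists_ne (0 : ↥D)
  exact ⟨y.1, y.2, fun h => hy (Subtype.ext h)⟩

end Chain

/-- **The dual of an MRD code is MRD.** Let `R` be a finite chain ring,
`m ≤ n`, and `C ⊆ M_{m,n}(R)` a code (a free `R`-submodule) with `0 < rank C < mn` and
minimum rank distance `d := min{rank X : X ∈ C, X ≠ 0}`. If `C` is MRD, i.e.
`|C| = |R|^{m(n−d+1)}`, then `C^⊥` is MRD: with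
`d^⊥ := min{rank Y : Y ∈ C^⊥, Y ≠ 0}`, one has `|C^⊥| = |R|^{m(n−d^⊥+1)}`. -/
theorem dual_of_MRD_is_MRD
    {R : Type*} [CommRing R] [Finite R] [IsLocalRing R]
    (hchain : (IsLocalRing.maximalIdeal R).IsPrincipal)
    (m n : ℕ) (hmn : m ≤ n)
    (C : Submodule R (Matrix (Fin m) (Fin n) R)) [Module.Free R ↥C]
    (hpos : 0 < Module.finrank R ↥C) (hlt : Module.finrank R ↥C < m * n)
    (d : ℕ) (hd : d = sInf {r : ℕ | ∃ X ∈ C, X ≠ 0 ∧ matRank X = r})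
    (hMRD : Nat.card ↥C = Nat.card R ^ (m * (n - d + 1)))
    (dperp : ℕ) (hdperp : dperp = sInf {r : ℕ | ∃ Y ∈ dualCode C, Y ≠ 0 ∧ matRank Y = r}) :
    Nat.card ↥(dualCode C) = Nat.card R ^ (m * (n - dperp + 1)) := by
  classical
  set q := Nat.card R with hq_def
  have hq : 2 ≤ q := Finite.one_lt_card_iff_nontrivial.mpr inferInstance
  set k := Module.finrank R ↥C with hk_def
  -- cardinality of C from freeness
  haveI : Module.Finite R ↥C := Module.Finite.of_finite
  have hcardC : Nat.card ↥C = q ^ k := by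
    have := Nat.card_congr (Module.finBasis R ↥C).equivFun.toEquiv
    rw [this, Nat.card_fun]
    congr 1
    simp [k]
  -- exponent identification
  have hk : k = m * (n - d + 1) :=
    Nat.pow_right_injective hq (by show q ^ k = q ^ (m * (n - d + 1)); rw [← hcardC, hMRD])
  have hm0 : 0 < m := by
    rcases Nat.eq_zero_or_pos m with h | h
    · rw [hk, h] at hpos; simp at hpos
    · exact h
  -- properties of d
  obtain ⟨X₀, hX₀C, hX₀0⟩ : ∃ X ∈ C, X ≠ 0 := by
    apply exists_mem_ne_zero
    rw [hcardC]
    exact Nat.one_lt_pow (by omega) hq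
  have hdmem : d ∈ {r : ℕ | ∃ X ∈ C, X ≠ 0 ∧ matRank X = r} := by
    rw [hd]
    exact Nat.sInf_mem ⟨matRank X₀, X₀, hX₀C, hX₀0, rfl⟩
  obtain ⟨X₁, hX₁C, hX₁0, hX₁r⟩ := hdmem
  have hd1 : 1 ≤ d := hX₁r ▸ matRank_pos X₁ hX₁0
  have hdn : d ≤ n := hX₁r ▸ matRank_le_right X₁
  have hdistC : ∀ X ∈ C, X ≠ 0 → d ≤ matRank X := by
    intro X hX hX0
    rw [hd]
    exact Nat.sInf_le ⟨X, hX, hX0, rfl⟩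
  have hd2 : 2 ≤ d := by
    by_contra h
    have hd1' : d = 1 := by omega
    rw [hd1'] at hk
    have hn1 : n - 1 + 1 = n := by omega
    rw [hn1] at hk
    omega
  set t := n - d + 1 with ht_def
  have ht : t ≤ n := by omega
  have hdistt : ∀ X ∈ C, X ≠ 0 → n - t < matRank X := by
    intro X hX hX0
    have := hdistC X hX hX0
    omega
  have hcardt : Nat.card ↥C = q ^ (m * t) := hMRD
  have hBaer := chain_baer hchain
  have hprod := card_dualCode_mul hBaer C
  have hcardD : Nat.card ↥(dualCode C) = q ^ (m * (d - 1)) := by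
    have h1 : q ^ (m * n) = q ^ (m * (d - 1)) * q ^ k := by
      rw [← pow_add]
      congr 1
      rw [hk, ← Nat.mul_add]
      congr 1
      omega
    have h2 : Nat.card ↥(dualCode C) * q ^ k = q ^ (m * (d - 1)) * q ^ k := by
      rw [← h1, ← hprod, hcardC]
    exact Nat.eq_of_mul_eq_mul_right (pow_pos (by omega) k) h2
  obtain ⟨Y₀, hY₀D, hY₀0⟩ : ∃ Y ∈ dualCode C, Y ≠ 0 := by
    apply exists_mem_ne_zero
    rw [hcardD]
    exact Nat.one_lt_pow (Nat.mul_ne_zero (by omega) (by omega)) hq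
  have hdpmem : dperp ∈ {r : ℕ | ∃ Y ∈ dualCode C, Y ≠ 0 ∧ matRank Y = r} := by
    rw [hdperp]
    exact Nat.sInf_mem ⟨matRank Y₀, Y₀, hY₀D, hY₀0, rfl⟩
  obtain ⟨Y₁, hY₁D, hY₁0, hY₁r⟩ := hdpmem
  have hdp1 : 1 ≤ dperp := hY₁r ▸ matRank_pos Y₁ hY₁0
  have hdpn : dperp ≤ n := hY₁r ▸ matRank_le_right Y₁
  have hgt : t < dperp := hY₁r ▸ dual_dist_gt t ht C hdistt hcardt Y₁ hY₁D hY₁0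
  set t'' := n - dperp + 1 with ht''_def
  have ht'' : t'' ≤ n := by omega
  have hdistD : ∀ Y ∈ dualCode C, Y ≠ 0 → n - t'' < matRank Y := by
    intro Y hY hY0
    have h1 : dperp ≤ matRank Y := by
      rw [hdperp]
      exact Nat.sInf_le ⟨Y, hY, hY0, rfl⟩
    omega
  have hb := singleton_le (dualCode C) t'' ht'' hdistD
  have ht''le : t'' ≤ d - 1 := by omega
  have hle2 : q ^ (m * t'') ≤ q ^ (m * (d - 1)) :=
    Nat.pow_le_pow_right (by omega) (Nat.mul_le_mul_left m ht''le)
  exact le_antisymm hb (by rw [hcardD]; exact hle2)
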